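/- For every even integer D = 2t ≥ 2, the magic-square linear constraint system over ℤ_D with variables x_1,…,x_9 and constraints x_1+x_2+x_3=0, x_4+x_5+x_6=0, x_7+x_8+x_9=0, x_1+x_4+x_7=0, x_2+x_5+x_8=0, x_3+x_6+x_9=t has no classical solution, yet it admits a quantum solution on ℂ^D ⊗ ℂ^D consisting of two-quDit generalized Pauli operators. -/

import Mathlib

noncomputable section

/-- ω = exp(2πi/D). -/
noncomputable def rootOfUnity (D : ℕ) : ℂ := Complex.exp (2 * Real.pi * Complex.I / D)

/-- The boost operator `Z = Σ_j ω^j |j⟩⟨j|` on `ℂ^D`, as a matrix indexed by `ZMod D`. -/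
noncomputable def ZMat (D : ℕ) : Matrix (ZMod D) (ZMod D) ℂ :=
  Matrix.of fun i j => if i = j then rootOfUnity D ^ (ZMod.val j) else 0

/-- The shift operator `X = Σ_j |j+1⟩⟨j|` on `ℂ^D`, as a matrix indexed by `ZMod D`. -/
def XMat (D : ℕ) : Matrix (ZMod D) (ZMod D) ℂ :=
  Matrix.of fun i j => if i = j + 1 then 1 else 0

/-- The parity operator `Π_D = Σ_j |-j⟩⟨j|` on `ℂ^D`. -/
def parityMat (D : ℕ) : Matrix (ZMod D) (ZMod D) ℂ :=
  Matrix.of fun i j => if i = -j then 1 else 0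

/-- A single-quDit generalized Pauli operator: any matrix of the form `ω^k Z^p X^q` with
`k, p, q ∈ ℤ_D`. -/
def IsPauli1 (D : ℕ) [NeZero D] (σ : Matrix (ZMod D) (ZMod D) ℂ) : Prop :=
  ∃ k p q : ZMod D, σ = rootOfUnity D ^ k.val • (ZMat D ^ p.val * XMat D ^ q.val)

/-- The tensor product `σ₁ ⊗ ⋯ ⊗ σₙ` of `n` one-quDit matrices, as a matrix on
`(ℂ^D)^{⊗n}` indexed by `Fin n → ZMod D`. -/
noncomputable def tensorFun {D n : ℕ} (σs : Fin n → Matrix (ZMod D) (ZMod D) ℂ) :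
    Matrix (Fin n → ZMod D) (Fin n → ZMod D) ℂ :=
  Matrix.of fun f g => ∏ k, σs k (f k) (g k)

/-- An `n`-quDit generalized Pauli operator: a tensor product of `n` single-quDit
generalized Pauli operators. -/
def IsPauliN (D n : ℕ) [NeZero D]
    (σ : Matrix (Fin n → ZMod D) (Fin n → ZMod D) ℂ) : Prop :=
  ∃ σs : Fin n → Matrix (ZMod D) (ZMod D) ℂ, (∀ k, IsPauli1 D (σs k)) ∧ σ = tensorFun σs

end

/-- The coefficient matrix of the magic square LCS with all coefficients 1. -/
def msqMatrix (D : ℕ) : Matrix (Fin 6) (Fin 9) (ZMod D) :=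
  Matrix.of
    ![![1, 1, 1, 0, 0, 0, 0, 0, 0],
      ![0, 0, 0, 1, 1, 1, 0, 0, 0],
      ![0, 0, 0, 0, 0, 0, 1, 1, 1],
      ![1, 0, 0, 1, 0, 0, 1, 0, 0],
      ![0, 1, 0, 0, 1, 0, 0, 1, 0],
      ![0, 0, 1, 0, 0, 1, 0, 0, 1]]

/-!
Adding the three row equations and subtracting the three column equations gives `0 = t` in
`ℤ_{2t}`, so there is no classical solution. For the quantum solution put `x = X`,
`x' = X⁻¹ = X^(D-1)` and `z = Z^t`: since `ω^t = -1`, `z` is an involution anticommuting with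
the invertible `x`, exactly like the qubit Paulis `Z` and `X`. The Mermin–Peres square built from
`x ⊗ 1, 1 ⊗ x, z ⊗ 1, 1 ⊗ z` then has pairwise commuting rows and columns, and every line
product is `1` except the last column, whose product is `-1 = ω^t`.
-/

open Matrix
open scoped Kronecker

namespace Matrix

variable {m n : Type*}

theorem neg_kronecker {R : Type*} [Ring R] (a : Matrix m m R) (b : Matrix n n R) :
    (-a) ⊗ₖ b = -(a ⊗ₖ b) := by
  ext
  simp

theorem kronecker_neg {R : Type*} [Ring R] (a : Matrix m m R) (b : Matrix n n R) :
    a ⊗ₖ (-b) = -(a ⊗ₖ b) := by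
  ext
  simp

variable [Fintype m] [Fintype n]

theorem commute_kronecker {R : Type*} [CommSemiring R] {a c : Matrix m m R}
    {b d : Matrix n n R} (hac : Commute a c) (hbd : Commute b d) :
    Commute (a ⊗ₖ b) (c ⊗ₖ d) := by
  rw [Commute, SemiconjBy, ← mul_kronecker_mul, ← mul_kronecker_mul, hac.eq, hbd.eq]

theorem commute_kronecker_of_anticommute {R : Type*} [CommRing R] {a c : Matrix m m R}
    {b d : Matrix n n R} (hac : a * c = -(c * a)) (hbd : b * d = -(d * b)) :
    Commute (a ⊗ₖ b) (c ⊗ₖ d) := by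
  rw [Commute, SemiconjBy, ← mul_kronecker_mul, ← mul_kronecker_mul, hac, hbd, neg_kronecker,
    kronecker_neg, neg_neg]

theorem kronecker_pow [DecidableEq m] [DecidableEq n] {R : Type*} [CommSemiring R]
    (a : Matrix m m R) (b : Matrix n n R) (k : ℕ) :
    (a ⊗ₖ b) ^ k = (a ^ k) ⊗ₖ (b ^ k) := by
  induction k with
  | zero => simp
  | succ k ih => rw [pow_succ, ih, ← mul_kronecker_mul, ← pow_succ, ← pow_succ]

end Matrix

structure IsAnticommutingPair {R : Type*} [Ring R] (x x' z : R) : Prop where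
  mul_inv : x * x' = 1
  inv_mul : x' * x = 1
  sq : z * z = 1
  anticomm : z * x = -(x * z)

namespace IsAnticommutingPair

variable {R : Type*} [Ring R] {x x' z : R}

theorem commute_inv (h : IsAnticommutingPair x x' z) : Commute x x' :=
  h.mul_inv.trans h.inv_mul.symm

theorem anticomm_inv (h : IsAnticommutingPair x x' z) : z * x' = -(x' * z) :=
  calc z * x' = x' * (x * z) * x' := by rw [← mul_assoc x', h.inv_mul, one_mul]
    _ = -(x' * z * (x * x')) := by rw [← neg_eq_iff_eq_neg.mpr h.anticomm]; noncomm_ring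
    _ = -(x' * z) := by rw [h.mul_inv, mul_one]

theorem inv_anticomm_mul (h : IsAnticommutingPair x x' z) :
    x' * (z * x) = -(z * x * x') := by
  rw [← mul_assoc, ← neg_eq_iff_eq_neg.mpr h.anticomm_inv, neg_mul, mul_assoc, h.inv_mul,
    mul_assoc, h.mul_inv]

theorem anticomm_mul (h : IsAnticommutingPair x x' z) : z * (z * x) = -(z * x * z) := by
  rw [← mul_assoc, h.sq, h.anticomm, neg_mul, mul_assoc, h.sq, one_mul, mul_one, neg_neg]

theorem mul_self_mul (h : IsAnticommutingPair x x' z) : (z * x) * (z * x) = -(x * x) := by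
  rw [mul_assoc, ← mul_assoc x, ← neg_eq_iff_eq_neg.mpr h.anticomm, neg_mul, mul_neg,
    ← mul_assoc, ← mul_assoc, h.sq, one_mul]

end IsAnticommutingPair

section MagicSquare

variable {R : Type*} [CommRing R] {n : Type*} [Fintype n] [DecidableEq n]

def magicSquare (x x' z : Matrix n n R) : Fin 9 → Matrix (n × n) (n × n) R :=
  ![x ⊗ₖ 1,    1 ⊗ₖ z,  x' ⊗ₖ z,
    1 ⊗ₖ x,    z ⊗ₖ 1,  z ⊗ₖ x',
    x' ⊗ₖ x',  z ⊗ₖ z,  (z * x) ⊗ₖ (z * x)]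

def msqLineProd {M : Type*} [Monoid M] (A : Fin 9 → M) : Fin 6 → M :=
  ![A 0 * A 1 * A 2, A 3 * A 4 * A 5, A 6 * A 7 * A 8,
    A 0 * A 3 * A 6, A 1 * A 4 * A 7, A 2 * A 5 * A 8]

variable {x x' z : Matrix n n R}

theorem exists_kronecker_eq_magicSquare (P : Matrix n n R → Prop) (h1 : P 1) (hx : P x)
    (hx' : P x') (hz : P z) (hzx : P (z * x)) (j : Fin 9) :
    ∃ a b, P a ∧ P b ∧ magicSquare x x' z j = a ⊗ₖ b := by
  fin_cases j <;> exact ⟨_, _, ‹_›, ‹_›, rfl⟩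

theorem magicSquare_commute (h : IsAnticommutingPair x x' z) {j k : Fin 9}
    (hjk : (j : ℕ) / 3 = k / 3 ∨ (j : ℕ) % 3 = k % 3) :
    Commute (magicSquare x x' z j) (magicSquare x x' z k) := by
  have hxx' := h.commute_inv
  have hzx' := h.anticomm_inv
  have hx'zx := h.inv_anticomm_mul
  have hzzx := h.anticomm_mul
  have hx'z := neg_eq_iff_eq_neg.mp hzx'.symm
  have hzxx' := neg_eq_iff_eq_neg.mp hx'zx.symm
  have hzxz := neg_eq_iff_eq_neg.mp hzzx.symm
  -- on a common line the two entries are tensors of two commuting or two anticommuting factors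
  fin_cases j <;> fin_cases k <;> simp at hjk <;> simp only [magicSquare] <;>
    first
    | exact Commute.refl _
    | (apply commute_kronecker <;>
        first
        | exact Commute.one_left _ | exact Commute.one_right _ | exact Commute.refl _
        | exact hxx' | exact hxx'.symm)
    | (apply commute_kronecker_of_anticommute <;> assumption)

theorem magicSquare_msqLineProd (h : IsAnticommutingPair x x' z) :
    msqLineProd (magicSquare x x' z) = ![1, 1, 1, 1, 1, -1] := by
  ext1 i
  have hz (a : Matrix n n R) : z * (z * a) = a := by rw [← mul_assoc, h.sq, one_mul]
  fin_cases i <;> simp [msqLineProd, magicSquare, ← mul_kronecker_mul, mul_assoc, hz, h.mul_inv,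
    h.inv_mul, h.inv_anticomm_mul, h.sq, kronecker_neg]

theorem magicSquare_pow_eq_one (h : IsAnticommutingPair x x' z) {N : ℕ} (hN : Even N)
    (hx : x ^ N = 1) (j : Fin 9) : magicSquare x x' z j ^ N = 1 := by
  obtain ⟨t, rfl⟩ := hN
  rw [← two_mul] at hx ⊢
  have hx' : x' ^ (2 * t) = 1 := by
    simpa [h.commute_inv.symm.mul_pow, hx] using congrArg (· ^ (2 * t)) h.inv_mul
  have hz : z ^ (2 * t) = 1 := by rw [pow_mul, sq, h.sq, one_pow]
  have hzx : (z * x) ^ (2 * t) = (-1) ^ t := by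
    rw [pow_mul, sq, h.mul_self_mul, neg_pow, ← sq, ← pow_mul, hx, mul_one]
  fin_cases j <;> simp [magicSquare, kronecker_pow, hx, hx', hz, hzx]
  rw [← kronecker_pow, neg_kronecker, kronecker_neg, neg_neg, one_kronecker_one, one_pow]

end MagicSquare

section MsqMatrix

variable {D : ℕ}

theorem msqMatrix_mulVec_rowSum_eq_colSum (x : Fin 9 → ZMod D) :
    (msqMatrix D *ᵥ x) 0 + (msqMatrix D *ᵥ x) 1 + (msqMatrix D *ᵥ x) 2 =
      (msqMatrix D *ᵥ x) 3 + (msqMatrix D *ᵥ x) 4 + (msqMatrix D *ᵥ x) 5 := by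
  simp [msqMatrix, Matrix.mulVec, dotProduct, Fin.sum_univ_succ]
  ring

theorem not_exists_msqMatrix_mulVec_eq {b : Fin 6 → ZMod D}
    (hb : b 0 + b 1 + b 2 ≠ b 3 + b 4 + b 5) : ¬ ∃ x, msqMatrix D *ᵥ x = b := by
  rintro ⟨x, rfl⟩
  exact hb (msqMatrix_mulVec_rowSum_eq_colSum x)

theorem div_eq_or_mod_eq_of_msqMatrix_ne_zero {j k : Fin 9}
    (h : ∃ i, msqMatrix D i j ≠ 0 ∧ msqMatrix D i k ≠ 0) :
    (j : ℕ) / 3 = k / 3 ∨ (j : ℕ) % 3 = k % 3 := by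
  obtain ⟨i, hj, hk⟩ := h
  fin_cases i <;> fin_cases j <;> simp [msqMatrix] at hj ⊢ <;>
    fin_cases k <;> simp [msqMatrix] at hk ⊢

theorem list_prod_pow_msqMatrix_val [Fact (1 < D)] {M : Type*} [Monoid M] (A : Fin 9 → M)
    (i : Fin 6) : (List.ofFn fun j => A j ^ (msqMatrix D i j).val).prod = msqLineProd A i := by
  fin_cases i <;> simp [msqMatrix, msqLineProd, List.ofFn_succ, ZMod.val_one, mul_assoc]

end MsqMatrix

theorem pow_mul_eq_smul_mul_pow {R A : Type*} [CommMonoid R] [Monoid A] [MulAction R A]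
    [IsScalarTower R A A] [SMulCommClass R A A] {a b : A} {c : R} (h : a * b = c • (b * a))
    (k : ℕ) : a ^ k * b = c ^ k • (b * a ^ k) := by
  induction k with
  | zero => simp
  | succ k ih =>
    rw [pow_succ', mul_assoc, ih, mul_smul_comm, ← mul_assoc, h, smul_mul_assoc, smul_smul,
      mul_assoc, ← pow_succ', ← pow_succ]

section Weyl

variable (D : ℕ)

theorem ZMat_eq_diagonal : ZMat D = diagonal fun j => rootOfUnity D ^ j.val := by
  ext i j
  by_cases h : i = j <;> simp [ZMat, h]

variable [NeZero D]

theorem isPrimitiveRoot_rootOfUnity : IsPrimitiveRoot (rootOfUnity D) D :=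
  Complex.isPrimitiveRoot_exp D (NeZero.ne D)

theorem rootOfUnity_pow_half {t : ℕ} (hD : D = 2 * t) : rootOfUnity D ^ t = -1 := by
  have ht : t ≠ 0 := by rintro rfl; exact NeZero.ne D hD
  refine IsPrimitiveRoot.eq_neg_one_of_two_right ?_
  simpa [hD, ht] using (isPrimitiveRoot_rootOfUnity D).pow_of_dvd ht (hD ▸ dvd_mul_left t 2)

theorem rootOfUnity_pow_val_add_one (j : ZMod D) :
    rootOfUnity D ^ (j + 1).val = rootOfUnity D * rootOfUnity D ^ j.val := by
  have hω := (isPrimitiveRoot_rootOfUnity D).pow_eq_one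
  rw [ZMod.val_add, ZMod.val_one_eq_one_mod, ← pow_eq_pow_mod _ hω, pow_add,
    ← pow_eq_pow_mod _ hω, pow_one, mul_comm]

theorem ZMat_pow_self : ZMat D ^ D = 1 := by
  rw [ZMat_eq_diagonal, diagonal_pow, ← diagonal_one]
  congr 1
  funext j
  rw [Pi.pow_apply, ← pow_mul, mul_comm, pow_mul, (isPrimitiveRoot_rootOfUnity D).pow_eq_one,
    one_pow]

theorem XMat_pow (k : ℕ) :
    XMat D ^ k = of fun i j => if i = j + (k : ZMod D) then 1 else 0 := by
  induction k with
  | zero => ext i j; simp [one_apply]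
  | succ k ih =>
    rw [pow_succ, ih]
    ext i j
    simp [mul_apply, XMat, add_assoc, add_comm (1 : ZMod D)]

theorem XMat_pow_self : XMat D ^ D = 1 := by
  ext i j
  simp [XMat_pow, one_apply]

theorem ZMat_mul_XMat : ZMat D * XMat D = rootOfUnity D • (XMat D * ZMat D) := by
  ext i j
  by_cases h : i = j + 1 <;>
    simp [ZMat_eq_diagonal, diagonal_mul, mul_diagonal, XMat, h, rootOfUnity_pow_val_add_one]

theorem isPauli1_ZMat_pow_mul_XMat_pow (p q : ℕ) : IsPauli1 D (ZMat D ^ p * XMat D ^ q) :=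
  ⟨0, p, q, by rw [ZMod.val_natCast, ZMod.val_natCast, ZMod.val_zero, pow_zero, one_smul,
    ← pow_eq_pow_mod _ (ZMat_pow_self D), ← pow_eq_pow_mod _ (XMat_pow_self D)]⟩

theorem isAnticommutingPair_XMat_ZMat {t : ℕ} (hD : D = 2 * t) :
    IsAnticommutingPair (XMat D) (XMat D ^ (D - 1)) (ZMat D ^ t) where
  mul_inv := by rw [← pow_succ', Nat.sub_add_cancel NeZero.one_le, XMat_pow_self]
  inv_mul := by rw [← pow_succ, Nat.sub_add_cancel NeZero.one_le, XMat_pow_self]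
  sq := by rw [← pow_add, ← two_mul, ← hD, ZMat_pow_self]
  anticomm := by
    rw [pow_mul_eq_smul_mul_pow (ZMat_mul_XMat D), rootOfUnity_pow_half D hD, neg_one_smul]

end Weyl

theorem even_magicSquare_gap_general (D t : ℕ) [NeZero D] (hD : D = 2 * t) :
    (¬ ∃ x : Fin 9 → ZMod D,
        (msqMatrix D).mulVec x = ![0, 0, 0, 0, 0, (t : ZMod D)]) ∧
    (∃ A : Fin 9 → Matrix (ZMod D × ZMod D) (ZMod D × ZMod D) ℂ,
      (∀ j, ∃ σ τ : Matrix (ZMod D) (ZMod D) ℂ,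
        IsPauli1 D σ ∧ IsPauli1 D τ ∧ A j = Matrix.kroneckerMap (· * ·) σ τ) ∧
      (∀ j, A j ^ D = 1) ∧
      (∀ j k : Fin 9, (∃ i, msqMatrix D i j ≠ 0 ∧ msqMatrix D i k ≠ 0) →
        Commute (A j) (A k)) ∧
      (∀ i : Fin 6, (List.ofFn fun j => A j ^ (msqMatrix D i j).val).prod
          = rootOfUnity D ^ ((![0, 0, 0, 0, 0, (t : ZMod D)] : Fin 6 → ZMod D) i).val • 1)) := by
  have ht : t < D := by have := NeZero.ne D; omega
  have : Fact (1 < D) := ⟨by omega⟩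
  have h := isAnticommutingPair_XMat_ZMat D hD
  have hPauli (p q : ℕ) := isPauli1_ZMat_pow_mul_XMat_pow D p q
  refine ⟨not_exists_msqMatrix_mulVec_eq ?_,
    magicSquare (XMat D) (XMat D ^ (D - 1)) (ZMat D ^ t),
    exists_kronecker_eq_magicSquare _ (by simpa using hPauli 0 0) (by simpa using hPauli 0 1)
      (by simpa using hPauli 0 (D - 1)) (by simpa using hPauli t 0) (by simpa using hPauli t 1),
    magicSquare_pow_eq_one h ⟨t, by omega⟩ (XMat_pow_self D),
    fun j k hjk => magicSquare_commute h (div_eq_or_mod_eq_of_msqMatrix_ne_zero hjk),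
    fun i => ?_⟩
  · simpa [eq_comm, ZMod.natCast_eq_zero_iff] using Nat.not_dvd_of_pos_of_lt (by omega) ht
  · rw [list_prod_pow_msqMatrix_val, magicSquare_msqLineProd h]
    fin_cases i <;> simp [ZMod.val_natCast, Nat.mod_eq_of_lt ht, rootOfUnity_pow_half D hD]

/-- for every even `D = 2t ≥ 2`, the magic square LCS over `ℤ_D` with
constraint vector `b = (0,0,0,0,0,t)` has no classical solution, yet admits a quantum
solution on `ℂ^D ⊗ ℂ^D` consisting of two-quDit generalized Pauli operators. -/
theorem even_magicSquare_gap (D t : ℕ) [NeZero D] (ht : 0 < t) (hD : D = 2 * t) :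
    (¬ ∃ x : Fin 9 → ZMod D,
        (msqMatrix D).mulVec x = ![0, 0, 0, 0, 0, (t : ZMod D)]) ∧
    (∃ A : Fin 9 → Matrix (ZMod D × ZMod D) (ZMod D × ZMod D) ℂ,
      (∀ j, ∃ σ τ : Matrix (ZMod D) (ZMod D) ℂ,
        IsPauli1 D σ ∧ IsPauli1 D τ ∧ A j = Matrix.kroneckerMap (· * ·) σ τ) ∧
      (∀ j, A j ^ D = 1) ∧
      (∀ j k : Fin 9, (∃ i, msqMatrix D i j ≠ 0 ∧ msqMatrix D i k ≠ 0) →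
        Commute (A j) (A k)) ∧
      (∀ i : Fin 6, (List.ofFn fun j => A j ^ (msqMatrix D i j).val).prod
          = rootOfUnity D ^ ((![0, 0, 0, 0, 0, (t : ZMod D)] : Fin 6 → ZMod D) i).val • 1)) :=
  even_magicSquare_gap_general D t hD
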